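/- Let 0 < γ ≤ 1, k ≥ 1, and let u : Ω → [0,∞) be measurable with f ∈ L¹(Ω), f ≥ 0, and n ∈ ℕ. Then ∫_Ω f_n T_k(u) / (u + 1/n)^γ ≤ k^{1−γ} ∫_Ω f ≤ k ∫_Ω f, where T_k(u) = min(u,k) and f_n = min(f,n). -/
import Mathlib


open MeasureTheory

theorem stmt_14 {Ω : Type*} [MeasurableSpace Ω] (m : Measure Ω)
    (γ k : ℝ) (hγ0 : 0 < γ) (hγ1 : γ ≤ 1) (hk : 1 ≤ k)
    (u f : Ω → ℝ) (hu : Measurable u) (hu0 : ∀ x, 0 ≤ u x)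
    (hf : Measurable f) (hf0 : ∀ x, 0 ≤ f x) (hfint : Integrable f m)
    (n : ℕ) (hn : 1 ≤ n) :
    (∫ x, min (f x) n * min (u x) k / (u x + 1 / n) ^ γ ∂m) ≤
        k ^ (1 - γ) * ∫ x, f x ∂m ∧
      k ^ (1 - γ) * (∫ x, f x ∂m) ≤ k * ∫ x, f x ∂m := by
  have hk0 : (0:ℝ) < k := lt_of_lt_of_le one_pos hk
  have hc : (0:ℝ) < 1 / n := by positivity
  constructor
  · have hpt : ∀ x, min (f x) n * min (u x) k / (u x + 1 / n) ^ γ ≤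
        k ^ (1 - γ) * f x := by
      intro x
      set a := u x with ha
      have hac : (0:ℝ) < a + 1/n := by have := hu0 x; linarith
      have hrp : (0:ℝ) < (a + 1/n) ^ γ := Real.rpow_pos_of_pos hac γ
      have key : min a k ≤ k ^ (1 - γ) * (a + 1/n) ^ γ := by
        rcases le_total (a + 1/n) k with h | h
        · have h1 : min a k ≤ a + 1/n := le_trans (min_le_left _ _) (by linarith)
          have h2 : a + 1/n = (a + 1/n) ^ (1 - γ) * (a + 1/n) ^ γ := by
            rw [← Real.rpow_add hac]; simp
          have h3 : (a + 1/n) ^ (1 - γ) ≤ k ^ (1 - γ) :=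
            Real.rpow_le_rpow hac.le h (by linarith)
          calc min a k ≤ a + 1/n := h1
            _ = (a + 1/n) ^ (1 - γ) * (a + 1/n) ^ γ := h2
            _ ≤ k ^ (1 - γ) * (a + 1/n) ^ γ :=
                mul_le_mul_of_nonneg_right h3 hrp.le
        · have h1 : min a k ≤ k := min_le_right _ _
          have h2 : k = k ^ (1 - γ) * k ^ γ := by
            rw [← Real.rpow_add hk0]; simp
          have h3 : k ^ γ ≤ (a + 1/n) ^ γ := Real.rpow_le_rpow hk0.le h hγ0.le
          calc min a k ≤ k := h1
            _ = k ^ (1 - γ) * k ^ γ := h2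
            _ ≤ k ^ (1 - γ) * (a + 1/n) ^ γ :=
                mul_le_mul_of_nonneg_left h3 (Real.rpow_nonneg hk0.le _)
      have hratio : min a k / (a + 1/n) ^ γ ≤ k ^ (1 - γ) := by
        rw [div_le_iff₀ hrp]; exact key
      have hratio0 : 0 ≤ min a k / (a + 1/n) ^ γ := by
        apply div_nonneg _ hrp.le
        exact le_min (hu0 x) hk0.le
      have hfn : min (f x) n ≤ f x := min_le_left _ _
      have hfn0 : 0 ≤ min (f x) (n:ℝ) := le_min (hf0 x) (by positivity)
      calc min (f x) n * min a k / (a + 1/n) ^ γ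
          = min (f x) n * (min a k / (a + 1/n) ^ γ) := by ring
        _ ≤ f x * (k ^ (1 - γ)) := mul_le_mul hfn hratio hratio0 (hf0 x)
        _ = k ^ (1 - γ) * f x := by ring
    have hgint : Integrable (fun x => k ^ (1 - γ) * f x) m := hfint.const_mul _
    calc (∫ x, min (f x) n * min (u x) k / (u x + 1 / n) ^ γ ∂m)
        ≤ ∫ x, k ^ (1 - γ) * f x ∂m := by
          apply integral_mono_of_nonneg
          · filter_upwards with x
            have hac : (0:ℝ) < u x + 1/n := by have := hu0 x; linarith
            apply div_nonneg _ (Real.rpow_nonneg hac.le _)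
            exact mul_nonneg (le_min (hf0 x) (by positivity))
              (le_min (hu0 x) hk0.le)
          · exact hgint
          · filter_upwards with x using hpt x
      _ = k ^ (1 - γ) * ∫ x, f x ∂m := MeasureTheory.integral_const_mul _ _
  · have h1 : k ^ (1 - γ) ≤ k := by
      calc k ^ (1 - γ) ≤ k ^ (1:ℝ) :=
          Real.rpow_le_rpow_of_exponent_le hk (by linarith)
        _ = k := Real.rpow_one k
    exact mul_le_mul_of_nonneg_right h1 (integral_nonneg hf0)
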